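/- arXiv:1905.03426 — 2 statements merged into one kernel-verified Lean document; each statement's English description precedes it below -/
import Mathlib

section
/- Let n ≥ 4 be a natural number, x̄ > 0 and λ_L > 0. Then there exists A > 0 such that for all a ≥ A, e^{−a/x̄} [ (a/x̄)(−4/((n−1)(n−2))) + (a²/(2x̄²))((n+2)/((n−1)(n−2))) ] + e^{−a/λ_L} ((a³ − 6λ_L a² + 6λ_L² a)/(6 λ_L⁶)) · (x̄³(7n+6)/((n−1)(n−2)(n−3))) ≥ 0. -/
theorem exponential_D_nonneg_eventually (n : ℕ) (hn : 4 ≤ n)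
    (xbar : ℝ) (hxbar : 0 < xbar) (lamL : ℝ) (hlamL : 0 < lamL) :
    ∃ A > (0 : ℝ), ∀ a ≥ A,
      0 ≤ Real.exp (-a / xbar) *
            ((a / xbar) * (-4 / ((n - 1) * (n - 2)))
              + (a ^ 2 / (2 * xbar ^ 2)) * ((n + 2) / ((n - 1) * (n - 2))))
          + Real.exp (-a / lamL) *
            ((a ^ 3 - 6 * lamL * a ^ 2 + 6 * lamL ^ 2 * a) / (6 * lamL ^ 6)) *
            (xbar ^ 3 * (7 * n + 6) / ((n - 1) * (n - 2) * (n - 3))) := by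
  have hn4 : (4 : ℝ) ≤ (n : ℝ) := by exact_mod_cast hn
  have hn1 : (0 : ℝ) < (n : ℝ) - 1 := by linarith
  have hn2 : (0 : ℝ) < (n : ℝ) - 2 := by linarith
  have hn3 : (0 : ℝ) < (n : ℝ) - 3 := by linarith
  refine ⟨max (8 * xbar) (6 * lamL) + 1, by positivity, fun a ha => ?_⟩
  have ha8 : 8 * xbar ≤ a := le_trans (le_trans (le_max_left _ _) (by linarith)) ha
  have ha6 : 6 * lamL ≤ a := le_trans (le_trans (le_max_right _ _) (by linarith)) ha
  have hapos : 0 < a := by nlinarith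
  have hB1 : (a / xbar) * (-4 / (((n : ℝ) - 1) * ((n : ℝ) - 2)))
      + (a ^ 2 / (2 * xbar ^ 2)) * (((n : ℝ) + 2) / (((n : ℝ) - 1) * ((n : ℝ) - 2)))
      = (a * (((n : ℝ) + 2) * a - 8 * xbar)) / (2 * xbar ^ 2 * (((n : ℝ) - 1) * ((n : ℝ) - 2))) := by
    field_simp
    ring
  have h1 : 0 ≤ (a / xbar) * (-4 / (((n : ℝ) - 1) * ((n : ℝ) - 2)))
      + (a ^ 2 / (2 * xbar ^ 2)) * (((n : ℝ) + 2) / (((n : ℝ) - 1) * ((n : ℝ) - 2))) := by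
    rw [hB1]
    apply div_nonneg
    · nlinarith
    · positivity
  have h2 : 0 ≤ (a ^ 3 - 6 * lamL * a ^ 2 + 6 * lamL ^ 2 * a) / (6 * lamL ^ 6) := by
    apply div_nonneg
    · nlinarith
    · positivity
  have h3 : 0 ≤ xbar ^ 3 * (7 * (n : ℝ) + 6) / ((((n : ℝ) - 1) * ((n : ℝ) - 2)) * ((n : ℝ) - 3)) := by
    apply div_nonneg
    · positivity
    · positivity
  have he1 := Real.exp_pos (-a / xbar)
  have he2 := Real.exp_pos (-a / lamL)
  nlinarith [mul_nonneg (mul_nonneg he2.le h2) h3, mul_nonneg he1.le h1]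
end

section
/- Fix a ∈ ℝ and μ ∈ ℝ, and define G(σ) on (0,∞) by G(σ) = ∫_{−∞}^a (1/(σ√(2π))) e^{−(x−μ)²/(2σ²)} dx. Then for every σ > 0, the derivative with respect to σ of the function μ ↦ ∂G/∂μ — i.e., the mixed second partial ∂²F(a|μ,σ)/∂σ∂μ — equals −(1/(√(2π) σ²)) e^{−((a−μ)/(σ√2))²} [ ((a−μ)/σ)² − 1 ]. -/
/-!
With `φ_s` the centred Gaussian density and `Φ_s(y) = ∫_{x ≤ y} φ_s(x)`, translating the
integration variable turns `m ↦ ∫_{x ≤ a} φ_s(x - m)` into `m ↦ Φ_s(a - m)`. By the fundamental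
theorem of calculus its `m`-derivative is `-φ_s(a - m)`, an explicit function of `s` whose
`s`-derivative is `-φ_s(d) · (d² / s² - 1) / s` with `d = a - m`.
-/

open MeasureTheory Real Set

theorem setIntegral_Iic_comp_sub_right {E : Type*} [NormedAddCommGroup E] [NormedSpace ℝ E]
    (f : ℝ → E) (a m : ℝ) :
    ∫ x in Iic a, f (x - m) = ∫ x in Iic (a - m), f x := by
  rw [← (measurePreserving_sub_right volume m).setIntegral_preimage_emb
    (measurableEmbedding_subRight m) f (Iic (a - m)), preimage_sub_const_Iic, sub_add_cancel]

theorem hasDerivAt_integral_Iic {E : Type*} [NormedAddCommGroup E] [NormedSpace ℝ E]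
    [CompleteSpace E] {f : ℝ → E} (hf : Integrable f) {y : ℝ} (hy : ContinuousAt f y) :
    HasDerivAt (fun u => ∫ x in Iic u, f x) (f y) y := by
  have hsplit : ∀ u, ∫ x in Iic u, f x = (∫ x in (0 : ℝ)..u, f x) + ∫ x in Iic 0, f x := fun u =>
    (sub_eq_iff_eq_add.mp
      (intervalIntegral.integral_Iic_sub_Iic hf.integrableOn hf.integrableOn))
  rw [funext hsplit]
  exact (intervalIntegral.integral_hasDerivAt_right hf.intervalIntegrable
    hf.aestronglyMeasurable.stronglyMeasurableAtFilter hy).add_const _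

theorem hasDerivAt_integral_Iic_comp_sub {E : Type*} [NormedAddCommGroup E] [NormedSpace ℝ E]
    [CompleteSpace E] {f : ℝ → E} (hf : Integrable f) (a : ℝ) {m : ℝ}
    (hc : ContinuousAt f (a - m)) :
    HasDerivAt (fun m => ∫ x in Iic a, f (x - m)) (-f (a - m)) m := by
  simp_rw [setIntegral_Iic_comp_sub_right f a]
  exact (hasDerivAt_integral_Iic hf hc).comp_const_sub a m

theorem integrable_const_mul_exp_neg_sq_div (C : ℝ) {s : ℝ} (hs : s ≠ 0) :
    Integrable fun x : ℝ => C * exp (-x ^ 2 / (2 * s ^ 2)) := by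
  have hb : 0 < 1 / (2 * s ^ 2) := by positivity
  convert (integrable_exp_neg_mul_sq hb).const_mul C using 4
  ring

theorem hasDerivAt_gaussian_density_scale (d : ℝ) {σ : ℝ} (hσ : σ ≠ 0) :
    HasDerivAt (fun s : ℝ => 1 / (s * √(2 * π)) * exp (-d ^ 2 / (2 * s ^ 2)))
      (1 / (√(2 * π) * σ ^ 2) * exp (-d ^ 2 / (2 * σ ^ 2)) * ((d / σ) ^ 2 - 1)) σ := by
  have hnorm : HasDerivAt (fun s : ℝ => 1 / (s * √(2 * π))) (-(1 / (√(2 * π) * σ ^ 2))) σ := by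
    refine ((hasDerivAt_const σ 1).div ((hasDerivAt_id' σ).mul_const √(2 * π))
      (by positivity)).congr_deriv ?_
    field_simp
    ring
  have hexponent : HasDerivAt (fun s : ℝ => -d ^ 2 / (2 * s ^ 2)) (d ^ 2 / σ ^ 3) σ := by
    refine ((hasDerivAt_const σ (-d ^ 2)).div ((hasDerivAt_pow 2 σ).const_mul 2)
      (by positivity)).congr_deriv ?_
    field_simp
    ring
  refine (hnorm.fun_mul hexponent.exp).congr_deriv ?_
  field_simp
  ring

theorem normal_cdf_mixed_partial (a μ : ℝ) :
    ∀ σ : ℝ, 0 < σ →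
      deriv (fun s : ℝ =>
          deriv (fun m : ℝ =>
              ∫ x in Set.Iic a,
                (1 / (s * Real.sqrt (2 * π))) * Real.exp (-(x - m) ^ 2 / (2 * s ^ 2))) μ) σ
        = -(1 / (Real.sqrt (2 * π) * σ ^ 2)) *
            Real.exp (-((a - μ) / (σ * Real.sqrt 2)) ^ 2) *
            (((a - μ) / σ) ^ 2 - 1) := by
  intro σ hσ
  have hmean : (fun s : ℝ => deriv (fun m : ℝ => ∫ x in Iic a,
        1 / (s * √(2 * π)) * exp (-(x - m) ^ 2 / (2 * s ^ 2))) μ)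
      =ᶠ[nhds σ] fun s => -(1 / (s * √(2 * π)) * exp (-(a - μ) ^ 2 / (2 * s ^ 2))) := by
    filter_upwards [isOpen_ne.mem_nhds hσ.ne'] with s hs
    exact (hasDerivAt_integral_Iic_comp_sub (integrable_const_mul_exp_neg_sq_div _ hs) a
      (by fun_prop)).deriv
  have hexponent : -((a - μ) / (σ * √2)) ^ 2 = -(a - μ) ^ 2 / (2 * σ ^ 2) := by
    rw [div_pow, mul_pow, sq_sqrt zero_le_two]
    ring
  rw [hmean.deriv_eq, deriv.fun_neg,
    (hasDerivAt_gaussian_density_scale (a - μ) hσ.ne').deriv, hexponent, neg_mul, neg_mul]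
end
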